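/- arXiv:1506.05746 — 2 statements merged into one kernel-verified Lean document; each statement's English description precedes it below -/
import Mathlib

section
/- If θ = p/q with p, q coprime positive integers, 4 | q, and 0 < α ≤ 1, then the series ∑_{n=1}^∞ sin^n(π p n / q) / n^α diverges to +∞. -/
open Real Filter Finset

/-!
Write `q = 2r`. Then `sin (π p n / q) = cos (π (p n - r) / q)`. If `q ∣ p n - r` this cosine is `±1`,
and `n` is even because `4 ∣ q` and `p` is odd, so the `n`-th term is exactly `1 / n ^ α`; these `n`
form a residue class modulo `q` (as `p` is invertible mod `q`), on which `∑ 1 / n ^ α` diverges for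
`α ≤ 1`. For all other `n` the cosine is at most `cos (π / q) < 1` in absolute value, so the
remaining terms are dominated by a convergent geometric series.
-/

lemma cos_pi_mul_div_le_cos_pi_div {r N : ℝ} (hN : 0 < N) (hr : 1 ≤ r) (hrN : r ≤ N) :
    cos (π * r / N) ≤ cos (π / N) := by
  apply cos_le_cos_of_nonneg_of_le_pi (by positivity)
  · rw [div_le_iff₀ hN]; nlinarith [pi_pos]
  · exact div_le_div_of_nonneg_right (le_mul_of_one_le_right pi_pos.le hr) hN.le

lemma abs_cos_pi_mul_int_div_le (j : ℤ) {N : ℕ} (hj : ¬ (N : ℤ) ∣ j) :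
    |cos (π * j / N)| ≤ cos (π / N) := by
  rcases N.eq_zero_or_pos with rfl | hN
  · simp
  have hN' : (0 : ℝ) < N := by exact_mod_cast hN
  set r := j % N
  have hr0 : 0 < r := (Int.emod_pos_of_not_dvd hj).resolve_left (by omega)
  have hrN : r < N := Int.emod_lt_of_pos j (by omega)
  have hj' : (j : ℝ) = r + N * (j / N : ℤ) := by exact_mod_cast (Int.emod_add_mul_ediv j N).symm
  have hangle : π * j / N = π * r / N + (j / N : ℤ) * π := by rw [hj']; field_simp
  rw [hangle, cos_add_int_mul_pi, abs_mul, abs_neg_one_zpow, one_mul, abs_le]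
  have hr1 : (1 : ℝ) ≤ r := by exact_mod_cast hr0
  have hrN' : (r : ℝ) + 1 ≤ N := by exact_mod_cast hrN
  constructor
  · -- `-cos (π r / N) = cos (π (N - r) / N)`
    have := cos_pi_mul_div_le_cos_pi_div hN' (r := N - r) (by linarith) (by linarith)
    rw [mul_sub, sub_div, mul_div_cancel_right₀ _ hN'.ne', cos_pi_sub] at this
    linarith
  · exact cos_pi_mul_div_le_cos_pi_div hN' hr1 (by linarith)

lemma cos_pi_mul_int_div_pow_eq_one {j : ℤ} {N : ℕ} (hN : N ≠ 0) (hj : (N : ℤ) ∣ j) {n : ℕ}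
    (hn : Even n) : cos (π * j / N) ^ n = 1 := by
  obtain ⟨k, rfl⟩ := hj
  rw [show π * ((N * k : ℤ) : ℝ) / N = k * π by push_cast; field_simp, ← hn.pow_abs,
    abs_cos_int_mul_pi, one_pow]

lemma sin_pi_mul_div_eq_cos {a q r : ℝ} (hr : r ≠ 0) (hq : q = 2 * r) :
    sin (π * a / q) = cos (π * (a - r) / q) := by
  rw [← sin_add_pi_div_two, hq]; congr 1; field_simp; ring

lemma cos_pi_div_nonneg {N : ℝ} (hN : 2 ≤ N) : 0 ≤ cos (π / N) := by
  apply cos_nonneg_of_mem_Icc ⟨(neg_nonpos.mpr pi_div_two_pos.le).trans (by positivity), ?_⟩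
  gcongr

lemma cos_pi_div_lt_one {N : ℝ} (hN : 1 ≤ N) : cos (π / N) < 1 := by
  rw [← cos_zero]
  apply cos_lt_cos_of_nonneg_of_le_pi le_rfl (div_le_self pi_pos.le hN)
  exact div_pos pi_pos (by linarith)

lemma abs_pow_div_rpow_le (x : ℝ) (n : ℕ) {α : ℝ} (hα : 0 ≤ α) :
    |x ^ n / (n : ℝ) ^ α| ≤ |x| ^ n := by
  rcases n.eq_zero_or_pos with rfl | hn
  · rcases eq_or_ne α 0 with rfl | hα0 <;> simp [zero_rpow, *]
  rw [abs_div, abs_pow, abs_of_nonneg (by positivity : (0 : ℝ) ≤ (n : ℝ) ^ α)]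
  exact div_le_self (by positivity) (one_le_rpow (by exact_mod_cast hn) hα)

lemma not_summable_indicator_one_div_rpow {m : ℕ} (hm : m ≠ 0) (k : ZMod m) {α : ℝ}
    (hα : α ≤ 1) :
    ¬ Summable ({n : ℕ | (n : ZMod m) = k}.indicator fun n : ℕ ↦ 1 / (n : ℝ) ^ α) := by
  refine fun h ↦ Real.not_summable_indicator_one_div_natCast hm k (h.of_nonneg_of_le
    (fun n ↦ Set.indicator_nonneg (fun n _ ↦ by positivity) n)
    (fun n ↦ Set.indicator_le_indicator ?_))
  rcases n.eq_zero_or_pos with rfl | hn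
  · simpa using zero_rpow_nonneg α
  have hn1 : (1 : ℝ) ≤ n := by exact_mod_cast hn
  exact one_div_le_one_div_of_le (by positivity) (rpow_le_self_of_one_le hn1 hα)

lemma tendsto_sum_range_atTop_of_summable_sub {f g : ℕ → ℝ} (hg : ∀ n, 0 ≤ g n)
    (hg' : ¬ Summable g) (hfg : Summable (f - g)) :
    Tendsto (fun N ↦ ∑ n ∈ range N, f n) atTop atTop := by
  refine ((not_summable_iff_tendsto_nat_atTop_of_nonneg hg).mp hg').atTop_add
    hfg.hasSum.tendsto_sum_nat |>.congr fun N ↦ ?_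
  rw [← sum_add_distrib]
  simp

lemma tendsto_sum_Icc_one_atTop {f : ℕ → ℝ}
    (h : Tendsto (fun N ↦ ∑ n ∈ range N, f n) atTop atTop) :
    Tendsto (fun N ↦ ∑ n ∈ Icc 1 N, f n) atTop atTop := by
  refine tendsto_atTop_add_const_right _ (-f 0) (h.comp (tendsto_add_atTop_nat 1)) |>.congr
    fun N ↦ ?_
  rw [Function.comp_apply, range_eq_Ico, sum_eq_sum_Ico_succ_bot (by omega : 0 < N + 1),
    zero_add, Ico_add_one_right_eq_Icc]
  ring

section

variable {p q r : ℕ}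

lemma sin_pi_mul_div_pow_eq_one (hco : p.Coprime q) (hq4 : 4 ∣ q) (hr : q = 2 * r) (hq : q ≠ 0)
    {n : ℕ} (hn : (q : ℤ) ∣ p * n - r) : sin (π * p * n / q) ^ n = 1 := by
  have h2q : 2 ∣ q := dvd_trans (by norm_num) hq4
  have hp : Odd p := (Nat.Coprime.coprime_dvd_right h2q hco).odd_of_right
  have hpn : Even (p * n) := by
    have hdiff : (2 : ℤ) ∣ p * n - r := dvd_trans (by exact_mod_cast h2q) hn
    have hr2 : (2 : ℤ) ∣ r := by exact_mod_cast (by omega : 2 ∣ r)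
    rw [even_iff_two_dvd, ← Int.natCast_dvd_natCast]
    simpa using dvd_add hdiff hr2
  have hn_even : Even n := (Nat.even_mul.mp hpn).resolve_left (Nat.not_even_iff_odd.mpr hp)
  rw [mul_assoc, sin_pi_mul_div_eq_cos (r := r) (by norm_cast; omega) (by exact_mod_cast hr)]
  exact_mod_cast cos_pi_mul_int_div_pow_eq_one (j := p * n - r) hq hn hn_even

lemma abs_sin_pi_mul_div_le (hr : q = 2 * r) (hq : q ≠ 0) {n : ℕ} (hn : ¬ (q : ℤ) ∣ p * n - r) :
    |sin (π * p * n / q)| ≤ cos (π / q) := by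
  rw [mul_assoc, sin_pi_mul_div_eq_cos (r := r) (by norm_cast; omega) (by exact_mod_cast hr)]
  exact_mod_cast abs_cos_pi_mul_int_div_le (p * n - r) hn

lemma exists_setOf_dvd_mul_sub_eq (hco : p.Coprime q) :
    ∃ k : ZMod q, {n : ℕ | (q : ℤ) ∣ p * n - r} = {n : ℕ | (n : ZMod q) = k} := by
  refine ⟨(ZMod.unitOfCoprime p hco)⁻¹ * r, Set.ext fun n ↦ ?_⟩
  rw [Set.mem_ofPred_eq, Set.mem_ofPred_eq, Units.eq_inv_mul_iff_mul_eq, ZMod.coe_unitOfCoprime,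
    ← ZMod.intCast_eq_intCast_iff_dvd_sub]
  push_cast
  exact eq_comm

end

theorem stmt4_general (p q : ℕ) (hq : 0 < q) (hco : Nat.Coprime p q)
    (hq4 : 4 ∣ q) (α : ℝ) (hα0 : 0 < α) (hα1 : α ≤ 1) :
    Tendsto (fun N : ℕ => ∑ n ∈ Finset.Icc 1 N,
      Real.sin (Real.pi * p * n / q) ^ n / (n : ℝ) ^ α) atTop atTop := by
  obtain ⟨r, hr⟩ : 2 ∣ q := dvd_trans (by norm_num) hq4
  obtain ⟨k, hk⟩ := exists_setOf_dvd_mul_sub_eq (r := r) hco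
  set S := {n : ℕ | (q : ℤ) ∣ p * n - r}
  have hq2 : (2 : ℝ) ≤ q := by exact_mod_cast (by omega : 2 ≤ q)
  refine tendsto_sum_Icc_one_atTop <| tendsto_sum_range_atTop_of_summable_sub
    (g := S.indicator fun n ↦ 1 / (n : ℝ) ^ α) (Set.indicator_nonneg (fun n _ ↦ by positivity))
    (hk ▸ not_summable_indicator_one_div_rpow hq.ne' k hα1) ?_
  refine .of_norm_bounded (summable_geometric_of_lt_one (cos_pi_div_nonneg hq2)
    (cos_pi_div_lt_one (by linarith))) fun n ↦ ?_
  by_cases hn : n ∈ S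
  · rw [Pi.sub_apply, Set.indicator_of_mem hn, sin_pi_mul_div_pow_eq_one hco hq4 hr hq.ne' hn,
      sub_self, norm_zero]
    exact pow_nonneg (cos_pi_div_nonneg hq2) n
  · rw [Pi.sub_apply, Set.indicator_of_notMem hn, sub_zero, norm_eq_abs]
    exact (abs_pow_div_rpow_le _ n hα0.le).trans
      (pow_le_pow_left₀ (abs_nonneg _) (abs_sin_pi_mul_div_le hr hq.ne' hn) n)

/-- If θ = p/q with p, q coprime positive integers and 4 ∣ q, and 0 < α ≤ 1,
then ∑ sinⁿ(π p n / q) / n^α diverges to +∞. -/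
theorem stmt4 (p q : ℕ) (hp : 0 < p) (hq : 0 < q) (hco : Nat.Coprime p q)
    (hq4 : 4 ∣ q) (α : ℝ) (hα0 : 0 < α) (hα1 : α ≤ 1) :
    Tendsto (fun N : ℕ => ∑ n ∈ Finset.Icc 1 N,
      Real.sin (Real.pi * p * n / q) ^ n / (n : ℝ) ^ α) atTop atTop :=
  stmt4_general p q hq hco hq4 α hα0 hα1
end

section
/- If α > 1/2, then for almost every real θ (with respect to Lebesgue measure) the series ∑_{n=1}^∞ |cos(π n θ)|^n / n^α converges. -/
/-!
A series of nonnegative functions whose integrals are summable has an integrable sum, hence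
converges almost everywhere; so it suffices that on every interval of length 2 the integrals of
the terms are summable. Substituting `u = π n θ` and using the `π`-periodicity of `|cos u|ⁿ`,
the `n`-th integral equals `(2/π) ∫₀^π sinⁿ`, which by the Wallis identity
`(∫₀^π sinⁿ)(∫₀^π sinⁿ⁺¹) = 2π/(n+1)` is `O(n^{-1/2})`. Dividing by `n^α` leaves terms of size
`O(n^{-1/2-α})`, summable since `α > 1/2`.
-/

open Real Filter MeasureTheory Set

theorem ae_summable_norm_of_summable_integral_norm {X E ι : Type*} [MeasurableSpace X]
    {μ : Measure X} [NormedAddCommGroup E] [Countable ι] {f : ι → X → E}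
    (hf : ∀ i, Integrable (f i) μ) (h : Summable fun i => ∫ x, ‖f i x‖ ∂μ) :
    ∀ᵐ x ∂μ, Summable fun i => ‖f i x‖ := by
  refine summable_norm_of_tsum_eLpNorm_ne_top le_rfl (fun i => (hf i).aestronglyMeasurable) ?_
  simp_rw [eLpNorm_one_eq_lintegral_enorm, ← ofReal_integral_norm_eq_lintegral_enorm (hf _)]
  rw [← ENNReal.ofReal_tsum_of_nonneg (fun i => integral_nonneg fun x => norm_nonneg _) h]
  exact ENNReal.ofReal_ne_top

theorem ae_of_forall_ae_restrict_Ioc {α : Type*} [AddCommGroup α] [LinearOrder α]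
    [IsOrderedAddMonoid α] [Archimedean α] [MeasurableSpace α] {μ : Measure α} {p : α}
    (hp : 0 < p) {P : α → Prop} (h : ∀ t, ∀ᵐ x ∂μ.restrict (Ioc t (t + p)), P x) :
    ∀ᵐ x ∂μ, P x := by
  rw [← Measure.restrict_univ (μ := μ), ← iUnion_Ioc_add_zsmul hp 0, ae_restrict_iUnion_iff]
  intro n
  simpa [add_smul, add_assoc] using h (n • p)

theorem integral_sin_pow_mul_integral_sin_pow_succ (n : ℕ) :
    (∫ x in 0..π, sin x ^ n) * (∫ x in 0..π, sin x ^ (n + 1)) = 2 * π / (n + 1) := by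
  induction n with
  | zero => simp [integral_sin]; ring
  | succ k ih =>
    have hk : ∫ x in 0..π, sin x ^ (k + 2) = (k + 1) / (k + 2) * ∫ x in 0..π, sin x ^ k := by
      simp [integral_sin_pow]
    rw [hk, mul_left_comm, mul_comm (∫ x in 0..π, sin x ^ (k + 1)), ih]
    push_cast
    field_simp
    ring

theorem integral_sin_pow_le_sqrt {n : ℕ} (hn : n ≠ 0) :
    ∫ x in 0..π, sin x ^ n ≤ √(2 * π / n) := by
  obtain ⟨m, rfl⟩ := Nat.exists_eq_succ_of_ne_zero hn
  refine le_sqrt_of_sq_le ?_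
  calc (∫ x in 0..π, sin x ^ (m + 1)) ^ 2
      ≤ (∫ x in 0..π, sin x ^ m) * ∫ x in 0..π, sin x ^ (m + 1) := by
        rw [sq]
        exact mul_le_mul_of_nonneg_right (integral_sin_pow_succ_le m) (integral_sin_pow_pos _).le
    _ = 2 * π / (m + 1 : ℕ) := by rw [integral_sin_pow_mul_integral_sin_pow_succ]; push_cast; rfl

theorem periodic_abs_sin_pow (n : ℕ) : Function.Periodic (fun x => |sin x| ^ n) π := by
  intro x
  simp [sin_add_pi]

theorem integral_abs_cos_pow_mul (n : ℕ) (hn : n ≠ 0) (t : ℝ) :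
    ∫ θ in t..t + 2, |cos (π * n * θ)| ^ n = 2 / π * ∫ x in 0..π, sin x ^ n := by
  have hπn : π * n ≠ 0 := by positivity
  have hint (a b : ℝ) : IntervalIntegrable (fun x => |sin x| ^ n) volume a b :=
    (continuous_sin.abs.pow n).intervalIntegrable a b
  set a := π * n * t + π / 2
  calc ∫ θ in t..t + 2, |cos (π * n * θ)| ^ n
      = ∫ θ in t..t + 2, |sin (π * n * θ + π / 2)| ^ n := by simp only [sin_add_pi_div_two]
    _ = (π * n)⁻¹ • ∫ x in a..a + (2 * n : ℤ) • π, |sin x| ^ n := by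
        rw [intervalIntegral.integral_comp_mul_add (fun x => |sin x| ^ n) hπn]
        congr 2
        simp only [a, zsmul_eq_mul]
        push_cast
        ring
    _ = (π * n)⁻¹ • ((2 * n : ℤ) • ∫ x in 0..0 + π, |sin x| ^ n) := by
        rw [(periodic_abs_sin_pow n).intervalIntegral_add_zsmul_eq _ _ hint,
          (periodic_abs_sin_pow n).intervalIntegral_add_eq a 0]
    _ = 2 / π * ∫ x in 0..π, sin x ^ n := by
        rw [zero_add, zsmul_eq_mul, smul_eq_mul, intervalIntegral.integral_congr fun x hx => ?_]
        · push_cast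
          field_simp
        · rw [uIcc_of_le pi_pos.le] at hx
          simp [abs_of_nonneg (sin_nonneg_of_nonneg_of_le_pi hx.1 hx.2)]

theorem integral_abs_cos_pow_le {n : ℕ} (hn : n ≠ 0) (t : ℝ) :
    ∫ θ in t..t + 2, |cos (π * n * θ)| ^ n ≤ 2 / π * √(2 * π) * (n : ℝ) ^ (-(1 / 2 : ℝ)) := by
  rw [integral_abs_cos_pow_mul n hn, mul_assoc]
  gcongr
  calc ∫ x in 0..π, sin x ^ n ≤ √(2 * π / n) := integral_sin_pow_le_sqrt hn
    _ = √(2 * π) * (n : ℝ) ^ (-(1 / 2 : ℝ)) := by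
      rw [sqrt_div' _ (Nat.cast_nonneg n), sqrt_eq_rpow (n : ℝ), rpow_neg (Nat.cast_nonneg n),
        div_eq_mul_inv]

theorem summable_integral_abs_cos_pow_div_rpow {α : ℝ} (hα : 1 / 2 < α) (t : ℝ) :
    Summable fun n : ℕ => ∫ θ in Ioc t (t + 2), ‖|cos (π * n * θ)| ^ n / (n : ℝ) ^ α‖ := by
  have hp : -(1 / 2 : ℝ) - α < -1 := by linarith
  refine Summable.of_norm_bounded_eventually_nat
    ((summable_nat_rpow.2 hp).mul_left (2 / π * √(2 * π))) ?_
  filter_upwards [eventually_ne_atTop 0] with n hn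
  have hnα : 0 < (n : ℝ) ^ α := by positivity
  rw [norm_of_nonneg (integral_nonneg fun θ => norm_nonneg _)]
  simp_rw [norm_div, norm_pow, norm_eq_abs, abs_abs, abs_of_pos hnα]
  rw [MeasureTheory.integral_div, ← intervalIntegral.integral_of_le (by linarith),
    rpow_sub (by positivity), ← mul_div_assoc, div_le_div_iff_of_pos_right hnα]
  exact integral_abs_cos_pow_le hn t

/-- If α > 1/2, then for almost every real θ the series ∑ |cos(π n θ)|ⁿ / n^α converges. -/
theorem stmt14 (α : ℝ) (hα : 1 / 2 < α) :
    ∀ᵐ θ : ℝ ∂volume,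
      Summable (fun n : ℕ => |Real.cos (Real.pi * n * θ)| ^ n / (n : ℝ) ^ α) := by
  refine ae_of_forall_ae_restrict_Ioc two_pos fun t => ?_
  have hint (n : ℕ) : Integrable (fun θ => |cos (π * n * θ)| ^ n / (n : ℝ) ^ α)
      (volume.restrict (Ioc t (t + 2))) :=
    (Continuous.integrableOn_Icc (by fun_prop)).mono_set Ioc_subset_Icc_self
  filter_upwards [ae_summable_norm_of_summable_integral_norm hint
    (summable_integral_abs_cos_pow_div_rpow hα t)] with θ h using h.of_norm
end
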